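/- arXiv:2503.22870 — 3 statements merged into one kernel-verified Lean document; each statement's English description precedes it below -/
import Mathlib

section
/- Let A be a symmetric positive semidefinite 3×3 matrix with three distinct eigenvalues λ₁, λ₂, λ₃ and corresponding orthonormal eigenvectors u₁, u₂, u₃. Then for each β ∈ {1,2,3}, the matrix A* := tr(A·R(π,u_β)) I₃ − A·R(π,u_β), where R(π,u_β) = −I₃ + 2u_β u_βᵀ, has at least one negative eigenvalue. -/
open Matrix
open scoped Matrix

/-- The hat map: `hat v` is the skew-symmetric matrix with `(hat v) *ᵥ w = v ×₃ w`. -/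
noncomputable def hat (v : Fin 3 → ℝ) : Matrix (Fin 3) (Fin 3) ℝ :=
  !![0, -(v 2), v 1; v 2, 0, -(v 0); -(v 1), v 0, 0]

/-- `psi C = vex ((C - Cᵀ)/2)`, explicitly. -/
noncomputable def psi (C : Matrix (Fin 3) (Fin 3) ℝ) : Fin 3 → ℝ :=
  ![(C 2 1 - C 1 2) / 2, (C 0 2 - C 2 0) / 2, (C 1 0 - C 0 1) / 2]

/-- Membership in SO(3). -/
def IsSO3 (R : Matrix (Fin 3) (Fin 3) ℝ) : Prop := Rᵀ * R = 1 ∧ R.det = 1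

lemma pos_add_of_ne (a b : ℝ) (ha : 0 ≤ a) (hb : 0 ≤ b) (hab : a ≠ b) : 0 < a + b := by
  rcases eq_or_lt_of_le ha with h | h
  · rcases eq_or_lt_of_le hb with h2 | h2
    · exact absurd (h.symm.trans h2) hab
    · linarith
  · linarith

theorem exists_neg_eigenvalue_at_pi_rotation
    (A : Matrix (Fin 3) (Fin 3) ℝ) (hA : A.IsSymm) (hpsd : A.PosSemidef)
    (lam : Fin 3 → ℝ) (u : Fin 3 → (Fin 3 → ℝ))
    (heig : ∀ i, A *ᵥ u i = lam i • u i)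
    (horth : ∀ i j, u i ⬝ᵥ u j = if i = j then 1 else 0)
    (hdist : ∀ i j, i ≠ j → lam i ≠ lam j) :
    ∀ β : Fin 3,
      ∃ μ : ℝ, μ < 0 ∧ ∃ w : Fin 3 → ℝ, w ≠ 0 ∧
        ((A * (-1 + (2 : ℝ) • vecMulVec (u β) (u β))).trace •
            (1 : Matrix (Fin 3) (Fin 3) ℝ)
          - A * (-1 + (2 : ℝ) • vecMulVec (u β) (u β))) *ᵥ w = μ • w := by
  intro β
  have hkey : ∀ i, u i ⬝ᵥ (A *ᵥ u i) = lam i := by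
    intro i
    rw [heig i, dotProduct_smul, horth i i]
    simp
  have hnn : ∀ i, 0 ≤ lam i := by
    intro i
    have := hpsd.dotProduct_mulVec_nonneg (u i)
    rw [show star (u i) = u i from rfl, hkey i] at this
    exact this
  -- orthogonal matrix U with columns u i
  set U : Matrix (Fin 3) (Fin 3) ℝ := Matrix.of fun k i => u i k with hUdef
  have hUtU : Uᵀ * U = 1 := by
    ext i j
    simp only [Matrix.mul_apply, transpose_apply, hUdef, Matrix.of_apply, Matrix.one_apply]
    rw [← horth i j]
    rfl
  have hUUt : U * Uᵀ = 1 := mul_eq_one_comm.mp hUtU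
  -- trace A = sum of eigenvalues
  have htrA : A.trace = lam 0 + lam 1 + lam 2 := by
    have h1 : A.trace = (Uᵀ * (A * U)).trace := by
      rw [Matrix.trace_mul_comm, Matrix.mul_assoc, hUUt, Matrix.mul_one]
    rw [h1]
    have hAU : ∀ i, (fun k => (A * U) k i) = lam i • u i := by
      intro i
      funext k
      have := congrFun (heig i) k
      simpa [Matrix.mul_apply, mulVec, dotProduct, hUdef] using this
    have hdiag : ∀ i, (Uᵀ * (A * U)) i i = lam i := by
      intro i
      have : (Uᵀ * (A * U)) i i = u i ⬝ᵥ (fun k => (A * U) k i) := by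
        simp [Matrix.mul_apply, dotProduct, hUdef]
      rw [this, hAU i, dotProduct_smul, horth i i]
      simp
    rw [Matrix.trace]
    simp [Matrix.diag, Fin.sum_univ_three, hdiag 0, hdiag 1, hdiag 2]
  -- trace of A * vecMulVec
  have htrV : (A * vecMulVec (u β) (u β)).trace = lam β := by
    have : (A * vecMulVec (u β) (u β)).trace = u β ⬝ᵥ (A *ᵥ u β) := by
      rw [Matrix.trace]
      simp only [Matrix.diag, Matrix.mul_apply, vecMulVec_apply, mulVec, dotProduct]
      congr 1
      funext i
      rw [Finset.mul_sum]
      congr 1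
      funext j
      ring
    rw [this, hkey β]
  set B := A * (-1 + (2 : ℝ) • vecMulVec (u β) (u β)) with hBdef
  have htrB : B.trace = -(lam 0 + lam 1 + lam 2) + 2 * lam β := by
    rw [hBdef, Matrix.mul_add, Matrix.trace_add, Matrix.mul_neg, Matrix.mul_one,
      Matrix.trace_neg, Matrix.mul_smul, Matrix.trace_smul, htrV, htrA]
    simp
  -- eigen equation for u β
  have hmv : B *ᵥ u β = lam β • u β := by
    rw [hBdef, ← Matrix.mulVec_mulVec]
    have hR : (-1 + (2 : ℝ) • vecMulVec (u β) (u β)) *ᵥ u β = u β := by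
      rw [Matrix.add_mulVec, Matrix.neg_mulVec, Matrix.one_mulVec, Matrix.smul_mulVec]
      have : vecMulVec (u β) (u β) *ᵥ u β = u β := by
        funext k
        simp only [mulVec, vecMulVec_apply, dotProduct]
        have hs : ∑ j, u β j * u β j = 1 := by
          have := horth β β; simpa [dotProduct] using this
        simp_rw [mul_assoc]
        rw [← Finset.mul_sum, hs, mul_one]
      rw [this, two_smul]
      abel
    rw [hR, heig β]
  refine ⟨B.trace - lam β, ?_, u β, ?_, ?_⟩
  · rw [htrB]
    have h01 : lam 0 ≠ lam 1 := hdist 0 1 (by decide)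
    have h02 : lam 0 ≠ lam 2 := hdist 0 2 (by decide)
    have h12 : lam 1 ≠ lam 2 := hdist 1 2 (by decide)
    have hp12 := pos_add_of_ne _ _ (hnn 1) (hnn 2) h12
    have hp02 := pos_add_of_ne _ _ (hnn 0) (hnn 2) h02
    have hp01 := pos_add_of_ne _ _ (hnn 0) (hnn 1) h01
    have hβ : β = 0 ∨ β = 1 ∨ β = 2 := by omega
    rcases hβ with h | h | h <;> rw [h] <;> linarith
  · intro h
    have := horth β β
    rw [h] at this
    simp at this
  · rw [Matrix.sub_mulVec, Matrix.smul_mulVec, Matrix.one_mulVec, hmv, sub_smul]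
end

section
/- Let A be a symmetric 3×3 matrix with eigenpairs (λ₁,u₁), (λ₂,u₂), (λ₃,u₃), u_i orthonormal, and let B := tr(A·R(π,u₁)) I₃ − A·R(π,u₁) where R(π,u₁) = −I₃ + 2u₁u₁ᵀ. Then B has eigenpairs (−λ₂−λ₃, u₁), (λ₁−λ₃, u₂), (λ₁−λ₂, u₃). -/
open Matrix
open scoped Matrix

lemma vecMulVec_mulVec (w x v : Fin 3 → ℝ) :
    vecMulVec w x *ᵥ v = (x ⬝ᵥ v) • w := by
  ext i
  simp only [vecMulVec, mulVec, dotProduct, Pi.smul_apply, smul_eq_mul, of_apply,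
    Finset.mul_sum, Fin.sum_univ_three]
  ring

theorem eigenpairs_of_pi_rotation_potential
    (A : Matrix (Fin 3) (Fin 3) ℝ) (hA : A.IsSymm)
    (lam : Fin 3 → ℝ) (u : Fin 3 → (Fin 3 → ℝ))
    (heig : ∀ i, A *ᵥ u i = lam i • u i)
    (horth : ∀ i j, u i ⬝ᵥ u j = if i = j then 1 else 0)
    (B : Matrix (Fin 3) (Fin 3) ℝ)
    (hB : B = (A * (-1 + (2 : ℝ) • vecMulVec (u 0) (u 0))).trace •
            (1 : Matrix (Fin 3) (Fin 3) ℝ)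
          - A * (-1 + (2 : ℝ) • vecMulVec (u 0) (u 0))) :
    B *ᵥ u 0 = (-(lam 1) - lam 2) • u 0 ∧
    B *ᵥ u 1 = (lam 0 - lam 2) • u 1 ∧
    B *ᵥ u 2 = (lam 0 - lam 1) • u 2 := by
  set U : Matrix (Fin 3) (Fin 3) ℝ := Matrix.of u with hU
  have hUUT : U * Uᵀ = 1 := by
    ext i j
    simpa [hU, mul_apply, transpose_apply, dotProduct, one_apply] using horth i j
  have hUTU : Uᵀ * U = 1 := mul_eq_one_comm.mp hUUT
  -- trace A = sum of eigenvalues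
  have htrA : A.trace = lam 0 + lam 1 + lam 2 := by
    have h1 : A.trace = (U * A * Uᵀ).trace := by
      calc A.trace = (A * (Uᵀ * U)).trace := by rw [hUTU, mul_one]
        _ = ((A * Uᵀ) * U).trace := by rw [mul_assoc]
        _ = (U * (A * Uᵀ)).trace := (trace_mul_comm _ _)
        _ = (U * A * Uᵀ).trace := by rw [mul_assoc]
    have h2 : ∀ i, (U * A * Uᵀ) i i = lam i := by
      intro i
      have : (U * A * Uᵀ) i i = u i ⬝ᵥ (A *ᵥ u i) := by
        simp [mul_apply, mulVec, dotProduct, transpose_apply, hU, Finset.mul_sum,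
          Finset.sum_mul, mul_assoc]
        rw [Finset.sum_comm]
      rw [this, heig i, dotProduct_smul, horth i i]
      simp
    rw [h1, trace]
    simp [Matrix.diag, Fin.sum_univ_three, h2]
  -- action of the rotation on u i
  have hR : ∀ i, (-1 + (2 : ℝ) • vecMulVec (u 0) (u 0)) *ᵥ u i
      = (if i = 0 then (1:ℝ) else -1) • u i := by
    intro i
    rw [add_mulVec, smul_mulVec, vecMulVec_mulVec, horth 0 i, neg_mulVec, one_mulVec]
    rcases eq_or_ne i 0 with h | h
    · subst h; simp; module
    · have : (0:Fin 3) ≠ i := fun h' => h h'.symm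
      simp [h, this]
  have hAR : ∀ i, (A * (-1 + (2 : ℝ) • vecMulVec (u 0) (u 0))) *ᵥ u i
      = ((if i = 0 then (1:ℝ) else -1) * lam i) • u i := by
    intro i
    rw [← mulVec_mulVec, hR i, mulVec_smul, heig i, smul_smul]
  -- trace of A*R
  have htr : (A * (-1 + (2 : ℝ) • vecMulVec (u 0) (u 0))).trace
      = lam 0 - lam 1 - lam 2 := by
    have hAP : A * vecMulVec (u 0) (u 0) = vecMulVec (A *ᵥ u 0) (u 0) := by
      ext i j
      simp [mul_apply, vecMulVec, mulVec, dotProduct, Finset.sum_mul, mul_assoc]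
    have htrP : (vecMulVec (u 0) (u 0)).trace = 1 := by
      have := horth 0 0
      simpa [trace, Matrix.diag, vecMulVec, Fin.sum_univ_three, dotProduct,
        Fin.sum_univ_three] using this
    have htrP2 : (vecMulVec (lam 0 • u 0) (u 0)).trace = lam 0 := by
      have h00 : (u 0) ⬝ᵥ (u 0) = 1 := by simpa using horth 0 0
      simp only [vecMulVec, trace, Matrix.diag, Fin.sum_univ_three, of_apply,
        Pi.smul_apply, smul_eq_mul] at *
      simp only [dotProduct, Fin.sum_univ_three] at h00
      linear_combination lam 0 * h00
    rw [mul_add, mul_neg_one, Matrix.mul_smul, hAP, heig 0, trace_add, trace_neg,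
      trace_smul, htrP2, htrA]
    simp; ring
  refine ⟨?_, ?_, ?_⟩ <;>
  · rw [hB, sub_mulVec, smul_mulVec, one_mulVec, hAR, htr]
    simp
    module
end

section
/- Let A = Σ_l ρ_l a_l a_lᵀ be symmetric with distinct eigenvalues, and R ∈ SO(3) satisfy A R = Rᵀ A. Then either R = I₃ or R = R(π, u) for some unit eigenvector u of A, where R(π,u) = −I₃ + 2uuᵀ. -/
open Matrix
open scoped Matrix

theorem critical_points_characterization
    (A : Matrix (Fin 3) (Fin 3) ℝ) (hA : A.IsSymm) (hpsd : A.PosSemidef)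
    (lam : Fin 3 → ℝ) (u : Fin 3 → (Fin 3 → ℝ))
    (heig : ∀ i, A *ᵥ u i = lam i • u i)
    (horth : ∀ i j, u i ⬝ᵥ u j = if i = j then 1 else 0)
    (hdist : ∀ i j, i ≠ j → lam i ≠ lam j)
    (R : Matrix (Fin 3) (Fin 3) ℝ) (hR : IsSO3 R)
    (hcrit : A * R = Rᵀ * A) :
    R = 1 ∨ ∃ w : Fin 3 → ℝ, w ⬝ᵥ w = 1 ∧ (∃ μ : ℝ, A *ᵥ w = μ • w) ∧
      R = -1 + (2 : ℝ) • vecMulVec w w := by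
  obtain ⟨hRo, hRdet⟩ := hR
  set P : Matrix (Fin 3) (Fin 3) ℝ := Matrix.of u with hPdef
  -- P has the eigenvectors as rows
  have hPPT : P * Pᵀ = 1 := by
    ext i j
    have h := horth i j
    simp only [dotProduct] at h
    simp only [Matrix.mul_apply, Matrix.transpose_apply, hPdef, Matrix.of_apply,
      Matrix.one_apply]
    exact h
  have hPTP : Pᵀ * P = 1 := mul_eq_one_comm.mp hPPT
  have hPcan : ∀ X : Matrix (Fin 3) (Fin 3) ℝ, Pᵀ * (P * X) = X := fun X => by
    rw [← Matrix.mul_assoc, hPTP, Matrix.one_mul]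
  have hAPT : A * Pᵀ = Pᵀ * diagonal lam := by
    ext i j
    rw [Matrix.mul_apply, Matrix.mul_diagonal]
    have h := congrFun (heig j) i
    simp only [Matrix.mulVec, dotProduct, Pi.smul_apply, smul_eq_mul] at h
    simp only [Matrix.transpose_apply, hPdef, Matrix.of_apply]
    rw [h]; ring
  have hD : P * A * Pᵀ = diagonal lam := by
    rw [Matrix.mul_assoc, hAPT, ← Matrix.mul_assoc, hPPT, Matrix.one_mul]
  set S : Matrix (Fin 3) (Fin 3) ℝ := P * R * Pᵀ with hSdef
  have hSt : Sᵀ = P * Rᵀ * Pᵀ := by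
    rw [hSdef, Matrix.transpose_mul, Matrix.transpose_mul, Matrix.transpose_transpose,
      Matrix.mul_assoc]
  have hStS : Sᵀ * S = 1 := by
    rw [hSt, hSdef]
    calc P * Rᵀ * Pᵀ * (P * R * Pᵀ) = P * (Rᵀ * (Pᵀ * P) * R) * Pᵀ := by
          simp only [Matrix.mul_assoc]
      _ = 1 := by rw [hPTP, Matrix.mul_one, hRo, Matrix.mul_one, hPPT]
  have hSSt : S * Sᵀ = 1 := mul_eq_one_comm.mp hStS
  have hDS : diagonal lam * S = Sᵀ * diagonal lam := by
    rw [← hD, hSt, hSdef]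
    calc P * A * Pᵀ * (P * R * Pᵀ) = P * (A * (Pᵀ * P) * R) * Pᵀ := by
          simp only [Matrix.mul_assoc]
      _ = P * (Rᵀ * (Pᵀ * P) * A) * Pᵀ := by
          rw [hPTP, Matrix.mul_one, Matrix.mul_one, hcrit]
      _ = P * Rᵀ * Pᵀ * (P * A * Pᵀ) := by
          rw [hPTP, Matrix.mul_one]
          simp only [Matrix.mul_assoc, hPcan]
  set M : Matrix (Fin 3) (Fin 3) ℝ := diagonal lam * S with hMdef
  have hMM : M * M = diagonal (fun i => lam i * lam i) := by
    rw [hMdef]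
    calc diagonal lam * S * (diagonal lam * S)
        = diagonal lam * S * (Sᵀ * diagonal lam) := by rw [← hDS]
      _ = diagonal lam * (S * Sᵀ) * diagonal lam := by simp only [Matrix.mul_assoc]
      _ = diagonal lam * diagonal lam := by rw [hSSt, Matrix.mul_one]
      _ = diagonal (fun i => lam i * lam i) := by rw [Matrix.diagonal_mul_diagonal]
  have hlamnn : ∀ i, 0 ≤ lam i := by
    intro i
    have h := hpsd.dotProduct_mulVec_nonneg (u i)
    rw [heig i] at h
    have h2 : star (u i) ⬝ᵥ (lam i • u i) = lam i * (u i ⬝ᵥ u i) := by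
      simp only [dotProduct, Pi.star_apply, star_trivial, Pi.smul_apply, smul_eq_mul,
        Finset.mul_sum]
      exact Finset.sum_congr rfl fun k _ => by ring
    rw [h2, horth i i, if_pos rfl, mul_one] at h
    exact h
  have hsqdist : ∀ i j, i ≠ j → lam i * lam i ≠ lam j * lam j := by
    intro i j hij h
    rcases mul_self_eq_mul_self_iff.mp h with h1 | h1
    · exact hdist i j hij h1
    · have hi := hlamnn i; have hj := hlamnn j
      exact hdist i j hij (by linarith)
  have hcommM : M * diagonal (fun i => lam i * lam i) = diagonal (fun i => lam i * lam i) * M := by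
    rw [← hMM]; exact (Matrix.mul_assoc M M M).symm
  have hMoff : ∀ i j, i ≠ j → M i j = 0 := by
    intro i j hij
    have h := congrFun (congrFun hcommM i) j
    rw [Matrix.mul_diagonal, Matrix.diagonal_mul] at h
    by_contra hne
    have h2 : M i j * (lam j * lam j) = M i j * (lam i * lam i) := by
      rw [h]; ring
    exact hsqdist j i (Ne.symm hij) (mul_left_cancel₀ hne h2)
  have hMdiag : ∀ i, M i i * M i i = lam i * lam i := by
    intro i
    have h := congrFun (congrFun hMM i) i
    rw [Matrix.mul_apply] at h
    rw [Finset.sum_eq_single i (fun k _ hk => by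
      rw [hMoff i k (Ne.symm hk), zero_mul]) (fun h => absurd (Finset.mem_univ i) h)] at h
    rw [h, Matrix.diagonal_apply_eq]
  have hDSe : ∀ i j, lam i * S i j = M i j := by
    intro i j
    rw [hMdef, Matrix.diagonal_mul]
  have hrowS : ∀ i j, lam i ≠ 0 → i ≠ j → S i j = 0 := by
    intro i j hi hij
    have h := hDSe i j
    rw [hMoff i j hij] at h
    exact (mul_eq_zero.mp h).resolve_left hi
  have hzero : ∀ i j, lam i = 0 → lam j = 0 → i = j := by
    intro i j hi hj
    by_contra h
    exact hdist i j h (hi.trans hj.symm)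
  have hSoff : ∀ i j, i ≠ j → S i j = 0 := by
    intro i j hij
    by_cases hi : lam i = 0
    · have hj' : lam j ≠ 0 := fun h0 => hij (hzero i j hi h0)
      have hjj : S j j * S j j = 1 := by
        have h := congrFun (congrFun hSSt j) j
        rw [Matrix.mul_apply] at h
        rw [Finset.sum_eq_single j (fun k _ hk => by
          rw [hrowS j k hj' (Ne.symm hk), zero_mul]) (fun h => absurd (Finset.mem_univ j) h)] at h
        rw [Matrix.one_apply_eq] at h
        rw [← h]; rfl
      have h3 : ∀ k, k ≠ i → k ≠ j → S k j * S k j = 0 := by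
        intro k hki hkj
        rw [hrowS k j (fun h0 => hki (hzero k i h0 hi)) hkj, zero_mul]
      have hcol := congrFun (congrFun hStS j) j
      rw [Matrix.mul_apply, Matrix.one_apply_eq] at hcol
      have hsplit : ∑ k, Sᵀ j k * S k j = S i j * S i j + S j j * S j j := by
        have e1 : ∑ k, Sᵀ j k * S k j
            = Sᵀ j i * S i j + ∑ k ∈ Finset.univ.erase i, Sᵀ j k * S k j :=
          (Finset.add_sum_erase _ _ (Finset.mem_univ i)).symm
        have e2 : ∑ k ∈ Finset.univ.erase i, Sᵀ j k * S k j
            = Sᵀ j j * S j j + ∑ k ∈ (Finset.univ.erase i).erase j, Sᵀ j k * S k j :=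
          (Finset.add_sum_erase _ _ (Finset.mem_erase.mpr ⟨Ne.symm hij, Finset.mem_univ j⟩)).symm
        have e3 : ∑ k ∈ (Finset.univ.erase i).erase j, Sᵀ j k * S k j = 0 := by
          apply Finset.sum_eq_zero
          intro k hk
          rw [Finset.mem_erase, Finset.mem_erase] at hk
          rw [Matrix.transpose_apply, hrowS k j (fun h0 => hk.2.1.elim (hzero k i h0 hi)) hk.1,
            zero_mul]
        rw [e1, e2, e3, add_zero, Matrix.transpose_apply, Matrix.transpose_apply]
      rw [hsplit] at hcol
      have : S i j * S i j = 0 := by linarith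
      exact mul_self_eq_zero.mp this
    · exact hrowS i j hi hij
  have hSdiagAll : ∀ i, S i i * S i i = 1 := by
    intro i
    have h := congrFun (congrFun hSSt i) i
    rw [Matrix.mul_apply] at h
    rw [Finset.sum_eq_single i (fun k _ hk => by
      rw [hSoff i k (Ne.symm hk), zero_mul]) (fun h => absurd (Finset.mem_univ i) h)] at h
    rw [Matrix.one_apply_eq] at h
    rw [← h]; rfl
  have hRS : R = Pᵀ * S * P := by
    rw [hSdef]
    calc R = (Pᵀ * P) * R * (Pᵀ * P) := by rw [hPTP, Matrix.one_mul, Matrix.mul_one]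
      _ = Pᵀ * (P * R * Pᵀ) * P := by simp only [Matrix.mul_assoc]
  have hdet3 : S 0 0 * (S 1 1 * S 2 2) = 1 := by
    have hd : S = diagonal (fun i => S i i) := by
      ext a b
      by_cases hab : a = b
      · subst hab; rw [Matrix.diagonal_apply_eq]
      · rw [hSoff a b hab, Matrix.diagonal_apply_ne _ hab]
    have hds : S.det = 1 := by
      have h1 : S.det = P.det * R.det * Pᵀ.det := by
        rw [hSdef, Matrix.det_mul, Matrix.det_mul]
      have h2 : P.det * Pᵀ.det = 1 := by rw [← Matrix.det_mul, hPPT, Matrix.det_one]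
      calc S.det = (P.det * Pᵀ.det) * R.det := by rw [h1]; ring
        _ = 1 := by rw [h2, hRdet, one_mul]
    rw [hd, Matrix.det_diagonal, Fin.prod_univ_three] at hds
    rw [← hds]; ring
  have main : ∀ k : Fin 3, (∀ a, S a a = if a = k then 1 else -1) →
      ∃ w : Fin 3 → ℝ, w ⬝ᵥ w = 1 ∧ (∃ μ : ℝ, A *ᵥ w = μ • w) ∧
        R = -1 + (2 : ℝ) • vecMulVec w w := by
    intro k hval
    refine ⟨u k, by simpa using horth k k, ⟨lam k, heig k⟩, ?_⟩
    have hSd : S = diagonal (fun a => if a = k then (1:ℝ) else -1) := by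
      ext a b
      by_cases hab : a = b
      · subst hab; rw [Matrix.diagonal_apply_eq]; exact hval a
      · rw [hSoff a b hab, Matrix.diagonal_apply_ne _ hab]
    rw [hRS, hSd]
    ext i j
    have hid := congrFun (congrFun hPTP i) j
    rw [Matrix.mul_apply, Fin.sum_univ_three] at hid
    simp only [Matrix.transpose_apply, hPdef, Matrix.of_apply, Matrix.one_apply] at hid
    rw [Matrix.mul_apply, Fin.sum_univ_three]
    simp only [Matrix.mul_diagonal, Matrix.transpose_apply, hPdef, Matrix.of_apply,
      Matrix.add_apply, Matrix.neg_apply, Matrix.one_apply, Matrix.smul_apply,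
      Matrix.vecMulVec_apply, smul_eq_mul]
    fin_cases k <;> by_cases hij : i = j <;>
      simp only [hij, show (⟨0, by norm_num⟩ : Fin 3) = 0 from rfl,
        show (⟨1, by norm_num⟩ : Fin 3) = 1 from rfl,
        show (⟨2, by norm_num⟩ : Fin 3) = 2 from rfl, if_true, if_false] at hid ⊢ <;>
      norm_num [Fin.ext_iff] <;> linarith
  rcases mul_self_eq_one_iff.mp (hSdiagAll 0) with h0 | h0 <;>
    rcases mul_self_eq_one_iff.mp (hSdiagAll 1) with h1 | h1 <;>
    rcases mul_self_eq_one_iff.mp (hSdiagAll 2) with h2 | h2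
  · -- all 1 : identity
    left
    have hS1 : S = 1 := by
      ext a b
      by_cases hab : a = b
      · subst hab
        rw [Matrix.one_apply_eq]
        fin_cases a
        · exact h0
        · exact h1
        · exact h2
      · rw [hSoff a b hab, Matrix.one_apply_ne hab]
    rw [hRS, hS1, Matrix.mul_one, hPTP]
  · exact absurd hdet3 (by rw [h0, h1, h2]; norm_num)
  · exact absurd hdet3 (by rw [h0, h1, h2]; norm_num)
  · right
    refine main 0 ?_
    intro a
    fin_cases a
    · simpa using h0
    · simpa using h1
    · simpa using h2
  · exact absurd hdet3 (by rw [h0, h1, h2]; norm_num)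
  · right
    refine main 1 ?_
    intro a
    fin_cases a
    · simpa using h0
    · simpa using h1
    · simpa using h2
  · right
    refine main 2 ?_
    intro a
    fin_cases a
    · simpa using h0
    · simpa using h1
    · simpa using h2
  · exact absurd hdet3 (by rw [h0, h1, h2]; norm_num)
end
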